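/- arXiv:1010.6231 — 3 statements merged into one kernel-verified Lean document; each statement's English description precedes it below -/
import Mathlib

section
/- If M₁ and M₂ are binary matroids with ground sets E(M₁) = E₁ ∪ T and E(M₂) = E₂ ∪ T where E₁, E₂, T are pairwise disjoint, and M₁|T = M₂|T, then the binary matroid A on E₁ ∪ T ∪ E₂ whose cycle space is {C₁ ⊕ C₂ : C₁ a cycle of M₁, C₂ a cycle of M₂} (symmetric difference) satisfies A|(E₁ ∪ T) = M₁ and A|(E₂ ∪ T) = M₂; that is, A is an amalgam of M₁ and M₂. -/
open Finset

/-- A binary matroid on a finite ground set is determined by its cycle space, a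
GF(2)-subspace of GF(2)^E; the cycle space of a restriction M|S consists of the cycles
contained in S. -/
noncomputable def supportedOn {α : Type*} [Fintype α] [DecidableEq α] (A : Finset α) :
    Submodule (ZMod 2) (α → ZMod 2) :=
  Submodule.pi (↑(Aᶜ)) fun _ => ⊥

lemma mem_supportedOn {α : Type*} [Fintype α] [DecidableEq α] (A : Finset α)
    (x : α → ZMod 2) : x ∈ supportedOn A ↔ ∀ i, i ∉ A → x i = 0 := by
  simp [supportedOn, Submodule.mem_pi]

lemma key {α : Type*} [Fintype α] [DecidableEq α]
    (E₁ E₂ T : Finset α)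
    (hd1 : Disjoint E₁ T) (hd2 : Disjoint E₂ T) (hd3 : Disjoint E₁ E₂)
    (𝒞₁ 𝒞₂ : Submodule (ZMod 2) (α → ZMod 2))
    (hsupp₁ : ∀ x ∈ 𝒞₁, ∀ i, i ∉ E₁ ∪ T → x i = 0)
    (hsupp₂ : ∀ x ∈ 𝒞₂, ∀ i, i ∉ E₂ ∪ T → x i = 0)
    (hres : 𝒞₁ ⊓ supportedOn T = 𝒞₂ ⊓ supportedOn T) :
    (𝒞₁ ⊔ 𝒞₂) ⊓ supportedOn (E₁ ∪ T) = 𝒞₁ := by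
  apply le_antisymm
  · rintro x ⟨hx, hxs⟩
    replace hxs := (mem_supportedOn _ x).mp hxs
    obtain ⟨c₁, hc₁, c₂, hc₂, rfl⟩ := Submodule.mem_sup.mp hx
    have hc₂T : c₂ ∈ 𝒞₂ ⊓ supportedOn T := by
      refine ⟨hc₂, (mem_supportedOn _ _).mpr fun i hiT => ?_⟩
      by_cases hi : i ∈ E₂ ∪ T
      · have hiE₂ : i ∈ E₂ := by
          rcases Finset.mem_union.mp hi with h | h
          · exact h
          · exact absurd h hiT
        have hi1 : i ∉ E₁ ∪ T := by
          simp only [Finset.mem_union, not_or]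
          exact ⟨Finset.disjoint_right.mp hd3 hiE₂, hiT⟩
        have h1 := hsupp₁ c₁ hc₁ i hi1
        have h2 := hxs i hi1
        have : c₁ i + c₂ i = 0 := h2
        rw [h1, zero_add] at this
        exact this
      · exact hsupp₂ c₂ hc₂ i hi
    rw [← hres] at hc₂T
    exact Submodule.add_mem _ hc₁ hc₂T.1
  · intro x hx
    refine ⟨Submodule.mem_sup_left hx, (mem_supportedOn _ _).mpr fun i hi => hsupp₁ x hx i hi⟩

/-- Amalgam lemma: if binary matroids M₁, M₂ (given by their cycle spaces 𝒞₁, 𝒞₂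
supported on E₁ ∪ T and E₂ ∪ T respectively, with E₁, E₂, T pairwise disjoint) have the
same restriction to T, then the binary matroid A whose cycle space is
{C₁ ⊕ C₂ : C₁ ∈ 𝒞₁, C₂ ∈ 𝒞₂} (i.e. 𝒞₁ ⊔ 𝒞₂) satisfies A|(E₁ ∪ T) = M₁ and
A|(E₂ ∪ T) = M₂, so A is an amalgam of M₁ and M₂. -/
theorem stmt_0 {α : Type*} [Fintype α] [DecidableEq α]
    (E₁ E₂ T : Finset α)
    (hd1 : Disjoint E₁ T) (hd2 : Disjoint E₂ T) (hd3 : Disjoint E₁ E₂)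
    (𝒞₁ 𝒞₂ : Submodule (ZMod 2) (α → ZMod 2))
    (hsupp₁ : ∀ x ∈ 𝒞₁, ∀ i, i ∉ E₁ ∪ T → x i = 0)
    (hsupp₂ : ∀ x ∈ 𝒞₂, ∀ i, i ∉ E₂ ∪ T → x i = 0)
    (hres : 𝒞₁ ⊓ supportedOn T = 𝒞₂ ⊓ supportedOn T) :
    (𝒞₁ ⊔ 𝒞₂) ⊓ supportedOn (E₁ ∪ T) = 𝒞₁ ∧
      (𝒞₁ ⊔ 𝒞₂) ⊓ supportedOn (E₂ ∪ T) = 𝒞₂ := by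
  constructor
  · exact key E₁ E₂ T hd1 hd2 hd3 𝒞₁ 𝒞₂ hsupp₁ hsupp₂ hres
  · rw [sup_comm]
    exact key E₂ E₁ T hd2 hd1 hd3.symm 𝒞₂ 𝒞₁ hsupp₂ hsupp₁ hres.symm
end

section
/- Under the same hypotheses (T = {p₁,p₂,p₃} a circuit of a weighted binary matroid M with nonnegative weights, q = 2, and z₀,…,z₄ as before), the products satisfy z₁z₂ ≤ z₀z₄, z₁z₃ ≤ z₀z₄, and z₂z₃ ≤ z₀z₄. -/
open Finset

/-- Rank function of the binary matroid with cycle space 𝒞. -/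
noncomputable def rk {α : Type*} [Fintype α] [DecidableEq α]
    (𝒞 : Submodule (ZMod 2) (α → ZMod 2)) (A : Finset α) : ℤ :=
  (A.card : ℤ) - Module.finrank (ZMod 2) ↥(𝒞 ⊓ supportedOn A)

/-- The GF(2) indicator vector of a finset. -/
def ind {α : Type*} [DecidableEq α] (S : Finset α) : α → ZMod 2 :=
  fun i => if i ∈ S then 1 else 0

namespace Stmt8Aux

variable {α : Type*} [Fintype α] [DecidableEq α] (𝒞 : Submodule (ZMod 2) (α → ZMod 2))

noncomputable def nu (A : Finset α) : ℕ :=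
  Module.finrank (ZMod 2) ↥(𝒞 ⊓ supportedOn A)

variable {𝒞}

lemma mem_supportedOn {A : Finset α} {x : α → ZMod 2} :
    x ∈ supportedOn A ↔ ∀ i ∉ A, x i = 0 := by
  simp [supportedOn, Submodule.mem_pi]

lemma supportedOn_mono {A B : Finset α} (h : A ⊆ B) : supportedOn A ≤ supportedOn B := by
  intro x hx
  rw [mem_supportedOn] at hx ⊢
  exact fun i hi => hx i (fun hA => hi (h hA))

lemma supportedOn_inter (A B : Finset α) :
    supportedOn (A ∩ B) = (supportedOn A ⊓ supportedOn B : Submodule (ZMod 2) (α → ZMod 2)) := by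
  ext x
  simp only [Submodule.mem_inf, mem_supportedOn]
  constructor
  · intro h
    exact ⟨fun i hi => h i (fun hm => hi (Finset.mem_inter.1 hm).1),
           fun i hi => h i (fun hm => hi (Finset.mem_inter.1 hm).2)⟩
  · rintro ⟨h1, h2⟩ i hi
    by_cases hiA : i ∈ A
    · exact h2 i (fun hB => hi (Finset.mem_inter.2 ⟨hiA, hB⟩))
    · exact h1 i hiA

lemma inf_supportedOn_inter (A B : Finset α) :
    (𝒞 ⊓ supportedOn A) ⊓ (𝒞 ⊓ supportedOn B) = 𝒞 ⊓ supportedOn (A ∩ B) := by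
  rw [supportedOn_inter]
  exact (inf_inf_distrib_left _ _ _).symm

lemma nu_supermodular (A B : Finset α) :
    nu 𝒞 A + nu 𝒞 B ≤ nu 𝒞 (A ∪ B) + nu 𝒞 (A ∩ B) := by
  have h1 : (𝒞 ⊓ supportedOn A) ⊔ (𝒞 ⊓ supportedOn B) ≤ 𝒞 ⊓ supportedOn (A ∪ B) :=
    sup_le (inf_le_inf le_rfl (supportedOn_mono Finset.subset_union_left))
      (inf_le_inf le_rfl (supportedOn_mono Finset.subset_union_right))
  have h2 := inf_supportedOn_inter (𝒞 := 𝒞) A B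
  have h3 := Submodule.finrank_sup_add_finrank_inf_eq (𝒞 ⊓ supportedOn A) (𝒞 ⊓ supportedOn B)
  have h4 : Module.finrank (ZMod 2) ↥((𝒞 ⊓ supportedOn A) ⊔ (𝒞 ⊓ supportedOn B)) ≤ nu 𝒞 (A ∪ B) :=
    Submodule.finrank_mono h1
  have h5 : Module.finrank (ZMod 2) ↥((𝒞 ⊓ supportedOn A) ⊓ (𝒞 ⊓ supportedOn B)) = nu 𝒞 (A ∩ B) := by
    rw [h2]; rfl
  unfold nu at *
  omega

lemma nu_insert_mono (E : Finset α) {p : α} (hp : p ∉ E) {A B : Finset α}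
    (hB : B ⊆ E) (hAB : A ⊆ B) :
    nu 𝒞 (insert p A) + nu 𝒞 B ≤ nu 𝒞 (insert p B) + nu 𝒞 A := by
  have hpB : p ∉ B := fun h => hp (hB h)
  have hU : insert p A ∪ B = insert p B := by
    ext x
    simp only [Finset.mem_union, Finset.mem_insert]
    constructor
    · rintro ((rfl | h) | h)
      · exact Or.inl rfl
      · exact Or.inr (hAB h)
      · exact Or.inr h
    · rintro (rfl | h)
      · exact Or.inl (Or.inl rfl)
      · exact Or.inr h
  have hI : insert p A ∩ B = A := by
    ext x
    simp only [Finset.mem_inter, Finset.mem_insert]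
    constructor
    · rintro ⟨rfl | h, hxB⟩
      · exact absurd hxB hpB
      · exact h
    · intro h
      exact ⟨Or.inr h, hAB h⟩
  have := nu_supermodular (𝒞 := 𝒞) (insert p A) B
  rw [hU, hI] at this
  omega

lemma key (E : Finset α) (p₁ p₂ p₃ a b c : α)
    (hperm : ({a, b, c} : Finset α) = {p₁, p₂, p₃})
    (hab : a ≠ b) (hca : c ≠ a) (hcb : c ≠ b)
    (ha : a ∉ E) (hb : b ∉ E) (hc : c ∉ E)
    (hcirc : ind {p₁, p₂, p₃} ∈ 𝒞) {A : Finset α} (hA : A ⊆ E) :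
    nu 𝒞 (insert a A) + nu 𝒞 (insert b A) + 1 ≤ nu 𝒞 A + nu 𝒞 (A ∪ {p₁, p₂, p₃}) := by
  have haA : a ∉ A := fun h => ha (hA h)
  have hbA : b ∉ A := fun h => hb (hA h)
  have hcA : c ∉ A := fun h => hc (hA h)
  -- intersection of the two inserts
  have hI : insert a A ∩ insert b A = A := by
    ext x
    simp only [Finset.mem_inter, Finset.mem_insert]
    constructor
    · rintro ⟨rfl | h, rfl | h'⟩
      · exact absurd rfl hab
      · exact h'
      · exact h
      · exact h
    · intro h
      exact ⟨Or.inr h, Or.inr h⟩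
  have h1 : (𝒞 ⊓ supportedOn (insert a A)) ⊔ (𝒞 ⊓ supportedOn (insert b A)) ≤
      𝒞 ⊓ supportedOn (insert a (insert b A)) :=
    sup_le (inf_le_inf le_rfl (supportedOn_mono (Finset.insert_subset_insert _
        (Finset.subset_insert _ _))))
      (inf_le_inf le_rfl (supportedOn_mono (Finset.subset_insert _ _)))
  have hsub : insert a (insert b A) ⊆ A ∪ {p₁, p₂, p₃} := by
    rw [← hperm]
    intro x hx
    rcases Finset.mem_insert.1 hx with rfl | hx
    · exact Finset.mem_union_right _ (by simp)
    · rcases Finset.mem_insert.1 hx with rfl | hx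
      · exact Finset.mem_union_right _ (by simp)
      · exact Finset.mem_union_left _ hx
  have hcT : c ∈ ({p₁, p₂, p₃} : Finset α) := by
    rw [← hperm]; simp
  have hmemBig : ind {p₁, p₂, p₃} ∈ 𝒞 ⊓ supportedOn (A ∪ {p₁, p₂, p₃}) := by
    refine Submodule.mem_inf.2 ⟨hcirc, mem_supportedOn.2 fun i hi => ?_⟩
    have : i ∉ ({p₁, p₂, p₃} : Finset α) := fun h => hi (Finset.mem_union_right _ h)
    simp [ind, this]
  have hnotSmall : ind {p₁, p₂, p₃} ∉ 𝒞 ⊓ supportedOn (insert a (insert b A)) := by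
    intro h
    have h' := (Submodule.mem_inf.1 h).2
    rw [mem_supportedOn] at h'
    have hcnot : c ∉ insert a (insert b A) := by
      simp only [Finset.mem_insert]
      push_neg
      exact ⟨hca, hcb, hcA⟩
    have := h' c hcnot
    rw [ind, if_pos hcT] at this
    exact one_ne_zero this
  have hlt : 𝒞 ⊓ supportedOn (insert a (insert b A)) < 𝒞 ⊓ supportedOn (A ∪ {p₁, p₂, p₃}) := by
    refine lt_of_le_of_ne (inf_le_inf le_rfl (supportedOn_mono hsub)) fun he => ?_
    rw [← he] at hmemBig
    exact hnotSmall hmemBig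
  have hlt' : Module.finrank (ZMod 2) ↥(𝒞 ⊓ supportedOn (insert a (insert b A))) <
      nu 𝒞 (A ∪ {p₁, p₂, p₃}) := Submodule.finrank_lt_finrank_of_lt hlt
  have h4 : Module.finrank (ZMod 2)
      ↥((𝒞 ⊓ supportedOn (insert a A)) ⊔ (𝒞 ⊓ supportedOn (insert b A))) ≤
      Module.finrank (ZMod 2) ↥(𝒞 ⊓ supportedOn (insert a (insert b A))) :=
    Submodule.finrank_mono h1
  have h3 := Submodule.finrank_sup_add_finrank_inf_eq
    (𝒞 ⊓ supportedOn (insert a A)) (𝒞 ⊓ supportedOn (insert b A))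
  have h5 : Module.finrank (ZMod 2)
      ↥((𝒞 ⊓ supportedOn (insert a A)) ⊓ (𝒞 ⊓ supportedOn (insert b A))) = nu 𝒞 A := by
    rw [inf_supportedOn_inter, hI]; rfl
  unfold nu at *
  omega




lemma pair_ineq (E : Finset α) (p₁ p₂ p₃ a b c : α)
    (hperm : ({a, b, c} : Finset α) = {p₁, p₂, p₃})
    (hab : a ≠ b) (hca : c ≠ a) (hcb : c ≠ b)
    (ha : a ∉ E) (hb : b ∉ E) (hc : c ∉ E)
    (hP : ({p₁, p₂, p₃} : Finset α).card = 3)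
    (𝒞 : Submodule (ZMod 2) (α → ZMod 2)) (hcirc : ind {p₁, p₂, p₃} ∈ 𝒞)
    (γ : α → ℝ) (hγ : ∀ e, 0 ≤ γ e) :
    (∑ A ∈ E.powerset, (∏ e ∈ A, γ e) * (2 : ℝ) ^ (-(rk 𝒞 (insert a A) - 1))) *
      (∑ A ∈ E.powerset, (∏ e ∈ A, γ e) * (2 : ℝ) ^ (-(rk 𝒞 (insert b A) - 1))) ≤
    (∑ A ∈ E.powerset, (∏ e ∈ A, γ e) * (2 : ℝ) ^ (-rk 𝒞 A)) *
      (∑ A ∈ E.powerset, (∏ e ∈ A, γ e) * (2 : ℝ) ^ (-(rk 𝒞 (A ∪ {p₁, p₂, p₃}) - 2))) := by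
  have h2pos : (0 : ℝ) < 2 := by norm_num
  have h2ne : (2 : ℝ) ≠ 0 := by norm_num
  set ν : Finset α → ℕ := nu 𝒞 with hν
  set μ : Finset α → ℝ :=
    fun A => if A ⊆ E then (∏ e ∈ A, γ e) * (2 : ℝ) ^ ((ν A : ℤ) - A.card) else 0 with hμdef
  set f : Finset α → ℝ :=
    fun A => (2 : ℝ) ^ ((ν (insert a (A ∩ E)) : ℤ) - ν (A ∩ E)) with hfdef
  set g : Finset α → ℝ :=
    fun A => (2 : ℝ) ^ ((ν (insert b (A ∩ E)) : ℤ) - ν (A ∩ E)) with hgdef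
  have hμ0 : 0 ≤ μ := by
    intro A
    simp only [hμdef]
    split
    · exact mul_nonneg (Finset.prod_nonneg fun e _ => hγ e) (zpow_pos h2pos _).le
    · exact le_rfl
  have hf0 : 0 ≤ f := fun A => (zpow_pos h2pos _).le
  have hg0 : 0 ≤ g := fun A => (zpow_pos h2pos _).le
  have hmono : ∀ (p : α), p ∉ E → Monotone (fun A : Finset α =>
      (2 : ℝ) ^ ((ν (insert p (A ∩ E)) : ℤ) - ν (A ∩ E))) := by
    intro p hp A B hAB
    dsimp only
    have h := nu_insert_mono (𝒞 := 𝒞) E hp (Finset.inter_subset_right)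
      (Finset.inter_subset_inter hAB le_rfl)
    refine zpow_le_zpow_right₀ (by norm_num) ?_
    rw [hν]
    omega
  have hfmono : Monotone f := hmono a ha
  have hgmono : Monotone g := hmono b hb
  have hsm : ∀ A B : Finset α, μ A * μ B ≤ μ (A ⊓ B) * μ (A ⊔ B) := by
    intro A B
    by_cases hA : A ⊆ E
    · by_cases hB : B ⊆ E
      · have hI : A ∩ B ⊆ E := Finset.inter_subset_left.trans hA
        have hU : A ∪ B ⊆ E := Finset.union_subset hA hB
        simp only [hμdef, Finset.inf_eq_inter, Finset.sup_eq_union, if_pos hA, if_pos hB,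
          if_pos hI, if_pos hU]
        have hprod : (∏ e ∈ A ∩ B, γ e) * ∏ e ∈ A ∪ B, γ e =
            (∏ e ∈ A, γ e) * ∏ e ∈ B, γ e := by
          rw [mul_comm]
          exact Finset.prod_union_inter
        have hcard := Finset.card_union_add_card_inter A B
        have hsup := nu_supermodular (𝒞 := 𝒞) A B
        calc (∏ e ∈ A, γ e) * (2 : ℝ) ^ ((ν A : ℤ) - A.card) *
              ((∏ e ∈ B, γ e) * (2 : ℝ) ^ ((ν B : ℤ) - B.card))
            = ((∏ e ∈ A, γ e) * ∏ e ∈ B, γ e) *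
              (2 : ℝ) ^ (((ν A : ℤ) - A.card) + ((ν B : ℤ) - B.card)) := by
              rw [zpow_add₀ h2ne]; ring
          _ ≤ ((∏ e ∈ A ∩ B, γ e) * ∏ e ∈ A ∪ B, γ e) *
              (2 : ℝ) ^ (((ν (A ∩ B) : ℤ) - (A ∩ B).card) + ((ν (A ∪ B) : ℤ) - (A ∪ B).card)) := by
              rw [hprod]
              refine mul_le_mul_of_nonneg_left (zpow_le_zpow_right₀ (by norm_num) ?_)
                (mul_nonneg (Finset.prod_nonneg fun e _ => hγ e)
                  (Finset.prod_nonneg fun e _ => hγ e))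
              rw [hν]
              push_cast
              have h1 : (nu 𝒞 A : ℤ) + nu 𝒞 B ≤ nu 𝒞 (A ∪ B) + nu 𝒞 (A ∩ B) := by
                exact_mod_cast hsup
              have h2 : ((A ∪ B).card : ℤ) + (A ∩ B).card = A.card + B.card := by
                exact_mod_cast hcard
              linarith
          _ = (∏ e ∈ A ∩ B, γ e) * (2 : ℝ) ^ ((ν (A ∩ B) : ℤ) - (A ∩ B).card) *
              ((∏ e ∈ A ∪ B, γ e) * (2 : ℝ) ^ ((ν (A ∪ B) : ℤ) - (A ∪ B).card)) := by
              rw [zpow_add₀ h2ne]; ring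
      · have : μ B = 0 := by simp [hμdef, hB]
        rw [this, mul_zero]
        exact mul_nonneg (hμ0 _) (hμ0 _)
    · have : μ A = 0 := by simp [hμdef, hA]
      rw [this, zero_mul]
      exact mul_nonneg (hμ0 _) (hμ0 _)
  have H := fkg f g μ hμ0 hf0 hg0 hfmono hgmono hsm
  -- rewriting the four sums
  have hvanish : ∀ (h : Finset α → ℝ), (∀ A, ¬ A ⊆ E → h A = 0) →
      ∑ A : Finset α, h A = ∑ A ∈ E.powerset, h A := by
    intro h hh
    exact (Finset.sum_subset (Finset.subset_univ _)
      (fun A _ hA => hh A (fun hs => hA (Finset.mem_powerset.2 hs)))).symm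
  have e0 : ∑ A : Finset α, μ A = ∑ A ∈ E.powerset, (∏ e ∈ A, γ e) * (2 : ℝ) ^ (-rk 𝒞 A) := by
    rw [hvanish μ (fun A hA => by simp [hμdef, hA])]
    refine Finset.sum_congr rfl fun A hA => ?_
    rw [Finset.mem_powerset] at hA
    simp only [hμdef, if_pos hA]
    congr 1
    simp only [rk, hν, nu]
    ring
  have key_ins : ∀ (p : α), p ∉ E → ∀ A, A ⊆ E →
      μ A * (2 : ℝ) ^ ((ν (insert p (A ∩ E)) : ℤ) - ν (A ∩ E)) =
      (∏ e ∈ A, γ e) * (2 : ℝ) ^ (-(rk 𝒞 (insert p A) - 1)) := by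
    intro p hp A hA
    have hpA : p ∉ A := fun h => hp (hA h)
    rw [Finset.inter_eq_left.mpr hA]
    simp only [hμdef, if_pos hA]
    rw [mul_assoc, ← zpow_add₀ h2ne]
    congr 1
    simp only [rk, hν, nu, Finset.card_insert_of_notMem hpA]
    push_cast
    ring
  have e1 : ∑ A : Finset α, μ A * f A =
      ∑ A ∈ E.powerset, (∏ e ∈ A, γ e) * (2 : ℝ) ^ (-(rk 𝒞 (insert a A) - 1)) := by
    rw [hvanish (fun A => μ A * f A) (fun A hA => by simp [hμdef, hA])]
    exact Finset.sum_congr rfl fun A hA => key_ins a ha A (Finset.mem_powerset.1 hA)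
  have e2 : ∑ A : Finset α, μ A * g A =
      ∑ A ∈ E.powerset, (∏ e ∈ A, γ e) * (2 : ℝ) ^ (-(rk 𝒞 (insert b A) - 1)) := by
    rw [hvanish (fun A => μ A * g A) (fun A hA => by simp [hμdef, hA])]
    exact Finset.sum_congr rfl fun A hA => key_ins b hb A (Finset.mem_powerset.1 hA)
  have e4 : ∑ A : Finset α, μ A * (f A * g A) ≤
      ∑ A ∈ E.powerset, (∏ e ∈ A, γ e) * (2 : ℝ) ^ (-(rk 𝒞 (A ∪ {p₁, p₂, p₃}) - 2)) := by
    rw [hvanish (fun A => μ A * (f A * g A)) (fun A hA => by simp [hμdef, hA])]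
    refine Finset.sum_le_sum fun A hA => ?_
    rw [Finset.mem_powerset] at hA
    have hkey := key (𝒞 := 𝒞) E p₁ p₂ p₃ a b c hperm hab hca hcb ha hb hc hcirc hA
    have hdisj : Disjoint A ({p₁, p₂, p₃} : Finset α) := by
      rw [Finset.disjoint_left]
      intro x hx hxT
      rw [← hperm] at hxT
      rcases Finset.mem_insert.1 hxT with rfl | hxT
      · exact ha (hA hx)
      · rcases Finset.mem_insert.1 hxT with rfl | hxT
        · exact hb (hA hx)
        · rw [Finset.mem_singleton] at hxT
          subst hxT
          exact hc (hA hx)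
    have hcardU : (A ∪ {p₁, p₂, p₃}).card = A.card + 3 := by
      rw [Finset.card_union_of_disjoint hdisj, hP]
    simp only [hfdef, hgdef, hμdef, if_pos hA, Finset.inter_eq_left.mpr hA]
    rw [mul_assoc, ← zpow_add₀ h2ne, ← zpow_add₀ h2ne]
    refine mul_le_mul_of_nonneg_left (zpow_le_zpow_right₀ (by norm_num) ?_)
      (Finset.prod_nonneg fun e _ => hγ e)
    simp only [rk, hν, nu, hcardU]
    push_cast
    have : (nu 𝒞 (insert a A) : ℤ) + nu 𝒞 (insert b A) + 1 ≤
        nu 𝒞 A + nu 𝒞 (A ∪ {p₁, p₂, p₃}) := by exact_mod_cast hkey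
    simp only [nu] at this
    linarith
  rw [e0, e1, e2] at H
  refine H.trans (mul_le_mul_of_nonneg_left e4 ?_)
  rw [← e0]
  exact Finset.sum_nonneg fun A _ => hμ0 A


end Stmt8Aux

/-- For a weighted binary matroid (M,γ) with nonnegative weights and circuit
T = {p₁,p₂,p₃}, the five minor Tutte specializations at q = 2,
z₀ = Z̃(M\p₁,p₂,p₃;γ), zⱼ = Z̃(M/pⱼ\rest;γ) (j = 1,2,3), z₄ = Z̃(M/p₁,p₂,p₃;γ),
satisfy z₁z₂ ≤ z₀z₄, z₁z₃ ≤ z₀z₄ and z₂z₃ ≤ z₀z₄.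
(Here r_{M/pⱼ}(A) = r(A ∪ {pⱼ}) − 1 and r_{M/T}(A) = r(A ∪ T) − 2, since T is a
circuit.) -/
theorem stmt_8 {α : Type*} [Fintype α] [DecidableEq α]
    (E : Finset α) (p₁ p₂ p₃ : α)
    (hne : p₁ ≠ p₂ ∧ p₁ ≠ p₃ ∧ p₂ ≠ p₃)
    (hpE : p₁ ∉ E ∧ p₂ ∉ E ∧ p₃ ∉ E)
    (𝒞 : Submodule (ZMod 2) (α → ZMod 2))
    (hsupp : ∀ x ∈ 𝒞, ∀ i, i ∉ E ∪ {p₁, p₂, p₃} → x i = 0)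
    (hcirc : ind {p₁, p₂, p₃} ∈ 𝒞)
    (hmin : ∀ S : Finset α, S ⊆ {p₁, p₂, p₃} → S.Nonempty → S ≠ {p₁, p₂, p₃} →
      ind S ∉ 𝒞)
    (γ : α → ℝ) (hγ : ∀ e, 0 ≤ γ e)
    (z₀ z₁ z₂ z₃ z₄ : ℝ)
    (hz₀ : z₀ = ∑ A ∈ E.powerset, (∏ e ∈ A, γ e) * (2 : ℝ) ^ (-rk 𝒞 A))
    (hz₁ : z₁ = ∑ A ∈ E.powerset,
      (∏ e ∈ A, γ e) * (2 : ℝ) ^ (-(rk 𝒞 (insert p₁ A) - 1)))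
    (hz₂ : z₂ = ∑ A ∈ E.powerset,
      (∏ e ∈ A, γ e) * (2 : ℝ) ^ (-(rk 𝒞 (insert p₂ A) - 1)))
    (hz₃ : z₃ = ∑ A ∈ E.powerset,
      (∏ e ∈ A, γ e) * (2 : ℝ) ^ (-(rk 𝒞 (insert p₃ A) - 1)))
    (hz₄ : z₄ = ∑ A ∈ E.powerset,
      (∏ e ∈ A, γ e) * (2 : ℝ) ^ (-(rk 𝒞 (A ∪ {p₁, p₂, p₃}) - 2))) :
    z₁ * z₂ ≤ z₀ * z₄ ∧ z₁ * z₃ ≤ z₀ * z₄ ∧ z₂ * z₃ ≤ z₀ * z₄ := by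
  obtain ⟨h12, h13, h23⟩ := hne
  obtain ⟨hp1, hp2, hp3⟩ := hpE
  have hP : ({p₁, p₂, p₃} : Finset α).card = 3 := by
    rw [Finset.card_insert_of_notMem (by simp [h12, h13]),
      Finset.card_insert_of_notMem (by simp [h23]), Finset.card_singleton]
  subst hz₀ hz₁ hz₂ hz₃ hz₄
  refine ⟨?_, ?_, ?_⟩
  · exact Stmt8Aux.pair_ineq E p₁ p₂ p₃ p₁ p₂ p₃ rfl h12 h13.symm h23.symm hp1 hp2 hp3 hP
      𝒞 hcirc γ hγ
  · exact Stmt8Aux.pair_ineq E p₁ p₂ p₃ p₁ p₃ p₂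
      (by ext x; simp only [Finset.mem_insert, Finset.mem_singleton]; tauto)
      h13 h12.symm h23 hp1 hp3 hp2 hP 𝒞 hcirc γ hγ
  · exact Stmt8Aux.pair_ineq E p₁ p₂ p₃ p₂ p₃ p₁
      (by ext x; simp only [Finset.mem_insert, Finset.mem_singleton]; tauto)
      h23 h12 h13 hp2 hp3 hp1 hP 𝒞 hcirc γ hγ
end

section
/- Let D be the 4×4 real matrix [[4,−1,−1,−1],[−1,1,0,0],[−1,0,1,0],[−1,0,0,1]]. Suppose z, s, r are vectors in ℝ⁴ with positive entries satisfying 1 ≤ zᵢ/z₀ ≤ 2, 1 ≤ sᵢ/s₀ ≤ 2, 1 ≤ rᵢ/r₀ ≤ 2 for i = 1,2,3, and e^{−ε} sᵢ ≤ rᵢ ≤ e^{ε} sᵢ for all i and some 0 < ε < 1. Then e^{−56ε} zᵀDs ≤ zᵀDr ≤ e^{56ε} zᵀDs. -/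
open Matrix


lemma invbnd_14 (E : ℝ) (hE : 1 ≤ E) : 1 - E⁻¹ ≤ E - 1 := by
  have hEpos : (0:ℝ) < E := lt_of_lt_of_le one_pos hE
  have hEinv : E * E⁻¹ = 1 := mul_inv_cancel₀ hEpos.ne'
  nlinarith [sq_nonneg (E-1)]

lemma key_14 (z0 z1 z2 z3 v0 v1 v2 v3 w0 w1 w2 w3 E : ℝ)
    (hE : 1 ≤ E) (hz0 : 0 < z0) (hv0 : 0 < v0)
    (hz1 : z0 ≤ z1) (hz1' : z1 ≤ 2*z0)
    (hz2 : z0 ≤ z2) (hz2' : z2 ≤ 2*z0)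
    (hz3 : z0 ≤ z3) (hz3' : z3 ≤ 2*z0)
    (hv1 : v0 ≤ v1) (hv1' : v1 ≤ 2*v0)
    (hv2 : v0 ≤ v2) (hv2' : v2 ≤ 2*v0)
    (hv3 : v0 ≤ v3) (hv3' : v3 ≤ 2*v0)
    (hw0 : E⁻¹ * v0 ≤ w0) (hw0' : w0 ≤ E * v0)
    (hw1 : E⁻¹ * v1 ≤ w1) (hw1' : w1 ≤ E * v1)
    (hw2 : E⁻¹ * v2 ≤ w2) (hw2' : w2 ≤ E * v2)
    (hw3 : E⁻¹ * v3 ≤ w3) (hw3' : w3 ≤ E * v3) :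
    4*z0*w0 - z0*(w1+w2+w3) - w0*(z1+z2+z3) + z1*w1+z2*w2+z3*w3
      ≤ (1 + 28*(E-1)) * (4*z0*v0 - z0*(v1+v2+v3) - v0*(z1+z2+z3) + z1*v1+z2*v2+z3*v3) := by
  have hdiff : 1 - E⁻¹ ≤ E - 1 := invbnd_14 E hE
  have hv1p : (0:ℝ) < v1 := lt_of_lt_of_le hv0 hv1
  have hv2p : (0:ℝ) < v2 := lt_of_lt_of_le hv0 hv2
  have hv3p : (0:ℝ) < v3 := lt_of_lt_of_le hv0 hv3
  have hδ : (0:ℝ) ≤ E - 1 := by linarith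
  have bnd : ∀ v w : ℝ, 0 < v → E⁻¹ * v ≤ w → w ≤ E * v →
      w - v ≤ (E-1)*v ∧ v - w ≤ (E-1)*v := by
    intro v w hv h1 h2
    have h3 : (1 - E⁻¹)*v ≤ (E-1)*v := mul_le_mul_of_nonneg_right hdiff hv.le
    constructor
    · linarith
    · linarith
  obtain ⟨d0u, d0l⟩ := bnd v0 w0 hv0 hw0 hw0'
  obtain ⟨d1u, d1l⟩ := bnd v1 w1 hv1p hw1 hw1'
  obtain ⟨d2u, d2l⟩ := bnd v2 w2 hv2p hw2 hw2'
  obtain ⟨d3u, d3l⟩ := bnd v3 w3 hv3p hw3 hw3'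
  have hzsum : z1+z2+z3 ≤ 6*z0 := by linarith
  have hzsum0 : (0:ℝ) ≤ z1+z2+z3 := by linarith
  have T0 : 4*z0*w0 - 4*(z0*v0) ≤ 4*((E-1)*(z0*v0)) := by
    linarith [mul_le_mul_of_nonneg_left d0u (by linarith : (0:ℝ) ≤ 4*z0)]
  have T1 : z0*v1 - z0*w1 ≤ 2*((E-1)*(z0*v0)) := by
    linarith [mul_le_mul_of_nonneg_left d1l hz0.le,
      mul_le_mul_of_nonneg_left hv1' (mul_nonneg hδ hz0.le)]
  have T2 : z0*v2 - z0*w2 ≤ 2*((E-1)*(z0*v0)) := by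
    linarith [mul_le_mul_of_nonneg_left d2l hz0.le,
      mul_le_mul_of_nonneg_left hv2' (mul_nonneg hδ hz0.le)]
  have T3 : z0*v3 - z0*w3 ≤ 2*((E-1)*(z0*v0)) := by
    linarith [mul_le_mul_of_nonneg_left d3l hz0.le,
      mul_le_mul_of_nonneg_left hv3' (mul_nonneg hδ hz0.le)]
  have T4 : v0*(z1+z2+z3) - w0*(z1+z2+z3) ≤ 6*((E-1)*(z0*v0)) := by
    linarith [mul_le_mul_of_nonneg_right d0l hzsum0,
      mul_le_mul_of_nonneg_left hzsum (mul_nonneg hδ hv0.le)]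
  have T5 : z1*w1 - z1*v1 ≤ 4*((E-1)*(z0*v0)) := by
    linarith [mul_le_mul_of_nonneg_left d1u (by linarith : (0:ℝ) ≤ z1),
      mul_le_mul (by linarith : z1 ≤ 2*z0)
        (mul_le_mul_of_nonneg_left hv1' hδ)
        (mul_nonneg hδ hv1p.le) (by linarith : (0:ℝ) ≤ 2*z0)]
  have T6 : z2*w2 - z2*v2 ≤ 4*((E-1)*(z0*v0)) := by
    linarith [mul_le_mul_of_nonneg_left d2u (by linarith : (0:ℝ) ≤ z2),
      mul_le_mul (by linarith : z2 ≤ 2*z0)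
        (mul_le_mul_of_nonneg_left hv2' hδ)
        (mul_nonneg hδ hv2p.le) (by linarith : (0:ℝ) ≤ 2*z0)]
  have T7 : z3*w3 - z3*v3 ≤ 4*((E-1)*(z0*v0)) := by
    linarith [mul_le_mul_of_nonneg_left d3u (by linarith : (0:ℝ) ≤ z3),
      mul_le_mul (by linarith : z3 ≤ 2*z0)
        (mul_le_mul_of_nonneg_left hv3' hδ)
        (mul_nonneg hδ hv3p.le) (by linarith : (0:ℝ) ≤ 2*z0)]
  have hAv : z0*v0 ≤ 4*z0*v0 - z0*(v1+v2+v3) - v0*(z1+z2+z3) + z1*v1+z2*v2+z3*v3 := by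
    linarith [mul_nonneg (sub_nonneg.2 hz1) (sub_nonneg.2 hv1),
      mul_nonneg (sub_nonneg.2 hz2) (sub_nonneg.2 hv2),
      mul_nonneg (sub_nonneg.2 hz3) (sub_nonneg.2 hv3)]
  have h28 : 28*((E-1)*(z0*v0)) ≤ 28*((E-1)*(4*z0*v0 - z0*(v1+v2+v3) - v0*(z1+z2+z3) + z1*v1+z2*v2+z3*v3)) :=
    mul_le_mul_of_nonneg_left (mul_le_mul_of_nonneg_left hAv hδ) (by norm_num)
  linarith [T0, T1, T2, T3, T4, T5, T6, T7, h28]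

/-- Perturbation stability of the bilinear form zᵀDr: if z, s, r are positive 4-vectors
with 1 ≤ zᵢ/z₀ ≤ 2 (and similarly for s, r) for i = 1,2,3, and
e^{−ε} sᵢ ≤ rᵢ ≤ e^{ε} sᵢ for all i, 0 < ε < 1, then
e^{−56ε} zᵀDs ≤ zᵀDr ≤ e^{56ε} zᵀDs. -/
theorem stmt_14 (z s r : Fin 4 → ℝ) (ε : ℝ)
    (hz : ∀ i, 0 < z i) (hs : ∀ i, 0 < s i) (hr : ∀ i, 0 < r i)
    (hz2 : ∀ i, i ≠ 0 → 1 ≤ z i / z 0 ∧ z i / z 0 ≤ 2)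
    (hs2 : ∀ i, i ≠ 0 → 1 ≤ s i / s 0 ∧ s i / s 0 ≤ 2)
    (hr2 : ∀ i, i ≠ 0 → 1 ≤ r i / r 0 ∧ r i / r 0 ≤ 2)
    (hε0 : 0 < ε) (hε1 : ε < 1)
    (hsr : ∀ i, Real.exp (-ε) * s i ≤ r i ∧ r i ≤ Real.exp ε * s i) :
    Real.exp (-(56 * ε)) *
        (z ⬝ᵥ ((!![4, -1, -1, -1;
                   -1, 1, 0, 0;
                   -1, 0, 1, 0;
                   -1, 0, 0, 1] : Matrix (Fin 4) (Fin 4) ℝ) *ᵥ s)) ≤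
      z ⬝ᵥ ((!![4, -1, -1, -1;
                -1, 1, 0, 0;
                -1, 0, 1, 0;
                -1, 0, 0, 1] : Matrix (Fin 4) (Fin 4) ℝ) *ᵥ r) ∧
    z ⬝ᵥ ((!![4, -1, -1, -1;
              -1, 1, 0, 0;
              -1, 0, 1, 0;
              -1, 0, 0, 1] : Matrix (Fin 4) (Fin 4) ℝ) *ᵥ r) ≤
      Real.exp (56 * ε) *
        (z ⬝ᵥ ((!![4, -1, -1, -1;
                   -1, 1, 0, 0;
                   -1, 0, 1, 0;
                   -1, 0, 0, 1] : Matrix (Fin 4) (Fin 4) ℝ) *ᵥ s)) := by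
  have expand : ∀ v : Fin 4 → ℝ,
      z ⬝ᵥ ((!![4, -1, -1, -1;
                -1, 1, 0, 0;
                -1, 0, 1, 0;
                -1, 0, 0, 1] : Matrix (Fin 4) (Fin 4) ℝ) *ᵥ v)
      = 4*z 0*v 0 - z 0*(v 1+v 2+v 3) - v 0*(z 1+z 2+z 3) + z 1*v 1+z 2*v 2+z 3*v 3 := by
    intro v
    simp [Matrix.mulVec, dotProduct, Fin.sum_univ_four, Matrix.vecHead, Matrix.vecTail]
    ring
  rw [expand s, expand r]
  have conv : ∀ (v : Fin 4 → ℝ), (∀ i, 0 < v i) →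
      (∀ i, i ≠ 0 → 1 ≤ v i / v 0 ∧ v i / v 0 ≤ 2) →
      ∀ i : Fin 4, i ≠ 0 → v 0 ≤ v i ∧ v i ≤ 2 * v 0 := by
    intro v hv h i hi
    obtain ⟨h1, h2⟩ := h i hi
    exact ⟨(one_le_div (hv 0)).mp h1, (div_le_iff₀ (hv 0)).mp h2⟩
  have cz := conv z hz hz2
  have cs := conv s hs hs2
  have cr := conv r hr hr2
  set E := Real.exp ε with hEdef
  have hEpos : (0:ℝ) < E := Real.exp_pos ε
  have hE : 1 ≤ E := Real.one_le_exp hε0.le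
  have hEneg : Real.exp (-ε) = E⁻¹ := Real.exp_neg ε
  have hsr' : ∀ i, E⁻¹ * s i ≤ r i ∧ r i ≤ E * s i := by
    intro i; rw [← hEneg]; exact hsr i
  have hrs' : ∀ i, E⁻¹ * r i ≤ s i ∧ s i ≤ E * r i := by
    intro i
    obtain ⟨h1, h2⟩ := hsr' i
    constructor
    · have := mul_le_mul_of_nonneg_left h2 (inv_nonneg.2 hEpos.le)
      rwa [← mul_assoc, inv_mul_cancel₀ hEpos.ne', one_mul] at this
    · have := mul_le_mul_of_nonneg_left h1 hEpos.le
      rwa [← mul_assoc, mul_inv_cancel₀ hEpos.ne', one_mul] at this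
  have K1 := key_14 (z 0) (z 1) (z 2) (z 3) (s 0) (s 1) (s 2) (s 3)
      (r 0) (r 1) (r 2) (r 3) E hE (hz 0) (hs 0)
      (cz 1 (by decide)).1 (cz 1 (by decide)).2
      (cz 2 (by decide)).1 (cz 2 (by decide)).2
      (cz 3 (by decide)).1 (cz 3 (by decide)).2
      (cs 1 (by decide)).1 (cs 1 (by decide)).2
      (cs 2 (by decide)).1 (cs 2 (by decide)).2
      (cs 3 (by decide)).1 (cs 3 (by decide)).2
      (hsr' 0).1 (hsr' 0).2 (hsr' 1).1 (hsr' 1).2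
      (hsr' 2).1 (hsr' 2).2 (hsr' 3).1 (hsr' 3).2
  have K2 := key_14 (z 0) (z 1) (z 2) (z 3) (r 0) (r 1) (r 2) (r 3)
      (s 0) (s 1) (s 2) (s 3) E hE (hz 0) (hr 0)
      (cz 1 (by decide)).1 (cz 1 (by decide)).2
      (cz 2 (by decide)).1 (cz 2 (by decide)).2
      (cz 3 (by decide)).1 (cz 3 (by decide)).2
      (cr 1 (by decide)).1 (cr 1 (by decide)).2
      (cr 2 (by decide)).1 (cr 2 (by decide)).2
      (cr 3 (by decide)).1 (cr 3 (by decide)).2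
      (hrs' 0).1 (hrs' 0).2 (hrs' 1).1 (hrs' 1).2
      (hrs' 2).1 (hrs' 2).2 (hrs' 3).1 (hrs' 3).2
  have hF : Real.exp (56 * ε) = E ^ (56:ℕ) := by
    rw [hEdef, ← Real.exp_nat_mul]; norm_num
  have hBern : 1 + 28*(E-1) ≤ E ^ (56:ℕ) := by
    have h := one_add_mul_le_pow (by linarith : (-2:ℝ) ≤ E - 1) 56
    have h2 : (1:ℝ) + (E-1) = E := by ring
    rw [h2] at h
    push_cast at h
    linarith
  have hApos : ∀ (v : Fin 4 → ℝ), 0 < v 0 →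
      (v 0 ≤ v 1 ∧ v 1 ≤ 2*v 0) → (v 0 ≤ v 2 ∧ v 2 ≤ 2*v 0) → (v 0 ≤ v 3 ∧ v 3 ≤ 2*v 0) →
      0 < 4*z 0*v 0 - z 0*(v 1+v 2+v 3) - v 0*(z 1+z 2+z 3) + z 1*v 1+z 2*v 2+z 3*v 3 := by
    intro v hv0 h1 h2 h3
    have p1 : 0 ≤ (z 1 - z 0)*(v 1 - v 0) :=
      mul_nonneg (sub_nonneg.2 (cz 1 (by decide)).1) (sub_nonneg.2 h1.1)
    have p2 : 0 ≤ (z 2 - z 0)*(v 2 - v 0) :=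
      mul_nonneg (sub_nonneg.2 (cz 2 (by decide)).1) (sub_nonneg.2 h2.1)
    have p3 : 0 ≤ (z 3 - z 0)*(v 3 - v 0) :=
      mul_nonneg (sub_nonneg.2 (cz 3 (by decide)).1) (sub_nonneg.2 h3.1)
    have p0 : 0 < z 0 * v 0 := mul_pos (hz 0) hv0
    nlinarith [p0, p1, p2, p3]
  have hAs := hApos s (hs 0) (cs 1 (by decide)) (cs 2 (by decide)) (cs 3 (by decide))
  have hAr := hApos r (hr 0) (cr 1 (by decide)) (cr 2 (by decide)) (cr 3 (by decide))
  constructor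
  · -- exp(-(56ε)) * A_s ≤ A_r
    rw [show -(56*ε) = -(56*ε) from rfl, Real.exp_neg, hF]
    rw [inv_mul_le_iff₀ (by positivity)]
    have hmul := mul_le_mul_of_nonneg_right hBern hAr.le
    calc 4*z 0*s 0 - z 0*(s 1+s 2+s 3) - s 0*(z 1+z 2+z 3) + z 1*s 1+z 2*s 2+z 3*s 3
        ≤ (1 + 28*(E-1)) * (4*z 0*r 0 - z 0*(r 1+r 2+r 3) - r 0*(z 1+z 2+z 3) + z 1*r 1+z 2*r 2+z 3*r 3) := K2
      _ ≤ E ^ (56:ℕ) * (4*z 0*r 0 - z 0*(r 1+r 2+r 3) - r 0*(z 1+z 2+z 3) + z 1*r 1+z 2*r 2+z 3*r 3) := hmul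
  · rw [hF]
    have hmul := mul_le_mul_of_nonneg_right hBern hAs.le
    calc 4*z 0*r 0 - z 0*(r 1+r 2+r 3) - r 0*(z 1+z 2+z 3) + z 1*r 1+z 2*r 2+z 3*r 3
        ≤ (1 + 28*(E-1)) * (4*z 0*s 0 - z 0*(s 1+s 2+s 3) - s 0*(z 1+z 2+z 3) + z 1*s 1+z 2*s 2+z 3*s 3) := K1
      _ ≤ E ^ (56:ℕ) * (4*z 0*s 0 - z 0*(s 1+s 2+s 3) - s 0*(z 1+z 2+z 3) + z 1*s 1+z 2*s 2+z 3*s 3) := hmul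
end
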